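/- arXiv:2311.13867 — 4 statements merged into one kernel-verified Lean document; each statement's English description precedes it below -/
import Mathlib

section
/- Let $n \ge 2$ and let $\lambda_1 \ge \lambda_2 \ge \dots \ge \lambda_n$ be real numbers satisfying $\sum_{i=1}^n \arctan \lambda_i \ge (n-2)\frac{\pi}{2}$. Then $\lambda_{n-1} \ge |\lambda_n|$. -/
theorem stmt_4 (n : ℕ) (hn : 2 ≤ n) (lam : Fin n → ℝ)
    (hmono : ∀ i j : Fin n, i ≤ j → lam j ≤ lam i)
    (hphase : (n - 2 : ℝ) * (Real.pi / 2) ≤ ∑ i, Real.arctan (lam i)) :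
    |lam ⟨n - 1, by omega⟩| ≤ lam ⟨n - 2, by omega⟩ := by
  set i1 : Fin n := ⟨n - 2, by omega⟩
  set i2 : Fin n := ⟨n - 1, by omega⟩
  have hne : i1 ≠ i2 := by
    simp only [i1, i2, Fin.mk.injEq, Fin.ne_iff_vne]
    omega
  have hsub : ({i1, i2} : Finset (Fin n)) ⊆ Finset.univ := Finset.subset_univ _
  have hsplit := (Finset.sum_sdiff (f := fun i => Real.arctan (lam i)) hsub).symm
  have hpair : ∑ i ∈ ({i1, i2} : Finset (Fin n)), Real.arctan (lam i)
      = Real.arctan (lam i1) + Real.arctan (lam i2) := Finset.sum_pair hne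
  have hcard : (Finset.univ \ ({i1, i2} : Finset (Fin n))).card = n - 2 := by
    rw [Finset.card_sdiff_of_subset hsub, Finset.card_univ, Fintype.card_fin,
      Finset.card_pair hne]
  have hrest : ∑ i ∈ Finset.univ \ ({i1, i2} : Finset (Fin n)), Real.arctan (lam i)
      ≤ (n - 2 : ℝ) * (Real.pi / 2) := by
    calc ∑ i ∈ Finset.univ \ ({i1, i2} : Finset (Fin n)), Real.arctan (lam i)
        ≤ ∑ _i ∈ Finset.univ \ ({i1, i2} : Finset (Fin n)), Real.pi / 2 :=
          Finset.sum_le_sum fun i _ => (Real.arctan_lt_pi_div_two _).le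
      _ = (n - 2 : ℝ) * (Real.pi / 2) := by
          rw [Finset.sum_const, hcard, nsmul_eq_mul]
          push_cast [Nat.cast_sub hn]
          ring
  have hkey : 0 ≤ Real.arctan (lam i1) + Real.arctan (lam i2) := by
    rw [hsplit, hpair] at hphase
    linarith
  have h1 : Real.arctan (-(lam i2)) ≤ Real.arctan (lam i1) := by
    rw [Real.arctan_neg]; linarith
  have h2 : -(lam i2) ≤ lam i1 := by
    by_contra h
    exact absurd (Real.arctan_strictMono (lt_of_not_ge h)) (not_lt.mpr h1)
  have h3 : lam i2 ≤ lam i1 := hmono i1 i2 (by simp [i1, i2, Fin.le_def]; omega)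
  exact abs_le.mpr ⟨by linarith, h3⟩
end

section
/- Let $n \ge 2$, let $1 \le k \le n-1$, and let $\lambda_1, \dots, \lambda_n$ be real numbers satisfying $\sum_{i=1}^n \arctan \lambda_i \ge (n-2)\frac{\pi}{2}$. Then the elementary symmetric polynomial $\sigma_k(\lambda_1, \dots, \lambda_n) \ge 0$. -/
/-! Put `θᵢ = π/2 - arctan λᵢ ∈ (0, π)`; the phase condition says `∑ θᵢ ≤ π`. Since any two of the
`θᵢ` then sum to at most `π`, if some `λᵢ₀ < 0` every other `λⱼ ≥ -λᵢ₀ > 0`. Writing `λ'` for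
the remaining entries, `σₖ(λ) = σₖ(λ') + λᵢ₀ σₖ₋₁(λ')`, so it suffices that
`σₖ₋₁(λ') ≤ (-λᵢ₀)⁻¹ σₖ(λ')`. For the reciprocals `μⱼ = λⱼ⁻¹`, whose arctangents are the `θⱼ`,
the complement bijection `t ↦ s \ t` turns this into `σₘ₊₁(μ) ≤ T σₘ(μ)` whenever
`∑ arctan μⱼ ≤ arctan T`, which follows by induction on the number of entries from the addition
formula `arctan x + arctan y = arctan ((x + y) / (1 - x y))`. -/

open Real Finset

namespace Real

theorem mul_lt_one_of_arctan_add_arctan_lt_pi_div_two {x y : ℝ} (hx : 0 ≤ x)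
    (h : arctan x + arctan y < π / 2) : x * y < 1 := by
  by_contra! hxy
  have hx : 0 < x := hx.lt_of_ne (by rintro rfl; norm_num at hxy)
  have : arctan x⁻¹ ≤ arctan y := arctan_mono ((inv_le_iff_one_le_mul₀' hx).mpr hxy)
  rw [arctan_inv_of_pos hx] at this
  linarith

end Real

namespace Finset

variable {ι R : Type*}

def esymm [CommSemiring R] (s : Finset ι) (f : ι → R) (k : ℕ) : R :=
  ∑ t ∈ s.powersetCard k, ∏ i ∈ t, f i

section CommSemiring

variable [CommSemiring R] {s : Finset ι} {f : ι → R}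

theorem esymm_insert [DecidableEq ι] {a : ι} (ha : a ∉ s) (k : ℕ) :
    (insert a s).esymm f (k + 1) = s.esymm f (k + 1) + f a * s.esymm f k := by
  have hnot : ∀ t ∈ s.powersetCard k, a ∉ t := fun t ht hat =>
    ha ((mem_powersetCard.mp ht).1 hat)
  rw [esymm, powersetCard_succ_insert ha, sum_union, sum_image, esymm, esymm, mul_sum]
  · exact congrArg _ (sum_congr rfl fun t ht => prod_insert (hnot t ht))
  · exact fun t₁ h₁ t₂ h₂ h => by
      rw [← erase_insert (hnot t₁ h₁), ← erase_insert (hnot t₂ h₂), h]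
  · refine disjoint_left.mpr fun u hu hu' => ?_
    obtain ⟨t, -, rfl⟩ := mem_image.mp hu'
    exact ha ((mem_powersetCard.mp hu).1 (mem_insert_self a t))

end CommSemiring

section Ordered

variable [CommSemiring R] [PartialOrder R] [IsOrderedRing R] {s t : Finset ι} {f : ι → R}

theorem esymm_nonneg (hf : ∀ i ∈ s, 0 ≤ f i) (k : ℕ) : 0 ≤ s.esymm f k :=
  sum_nonneg fun _ ht => prod_nonneg fun i hi => hf i ((mem_powersetCard.mp ht).1 hi)

theorem esymm_mono (hst : s ⊆ t) (hf : ∀ i ∈ t, 0 ≤ f i) (k : ℕ) :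
    s.esymm f k ≤ t.esymm f k :=
  sum_le_sum_of_subset_of_nonneg (powersetCard_mono hst) fun _ hu _ =>
    prod_nonneg fun i hi => hf i ((mem_powersetCard.mp hu).1 hi)

end Ordered

theorem esymm_eq_prod_mul_esymm_inv [DecidableEq ι] {K : Type*} [Field K] {s : Finset ι}
    {f : ι → K} (hf : ∀ i ∈ s, f i ≠ 0) {k : ℕ} (hk : k ≤ #s) :
    s.esymm f k = (∏ i ∈ s, f i) * s.esymm f⁻¹ (#s - k) := by
  rw [esymm, esymm, mul_sum]
  refine sum_nbij' (s \ ·) (s \ ·) (fun t ht => ?_) (fun t ht => ?_)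
    (fun t ht => sdiff_sdiff_eq_self (mem_powersetCard.mp ht).1)
    (fun t ht => sdiff_sdiff_eq_self (mem_powersetCard.mp ht).1) (fun t ht => ?_)
  · obtain ⟨hts, rfl⟩ := mem_powersetCard.mp ht
    exact mem_powersetCard.mpr ⟨sdiff_subset, card_sdiff_of_subset hts⟩
  · obtain ⟨hts, htc⟩ := mem_powersetCard.mp ht
    exact mem_powersetCard.mpr ⟨sdiff_subset, by rw [card_sdiff_of_subset hts, htc]; omega⟩
  · have hts := (mem_powersetCard.mp ht).1
    have hQ : ∏ i ∈ s \ t, f i ≠ 0 := prod_ne_zero_iff.mpr fun i hi => hf i (mem_sdiff.mp hi).1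
    simp only [Pi.inv_apply, prod_inv_distrib]
    rw [← prod_sdiff hts, mul_right_comm, mul_inv_cancel₀ hQ, one_mul]

theorem esymm_succ_le_mul_esymm_of_sum_arctan_le [DecidableEq ι] {s : Finset ι} {μ : ι → ℝ}
    (hμ : ∀ i ∈ s, 0 ≤ μ i) {T : ℝ} (h : ∑ i ∈ s, arctan (μ i) ≤ arctan T) (k : ℕ) :
    s.esymm μ (k + 1) ≤ T * s.esymm μ k := by
  induction s using Finset.induction_on generalizing T with
  | empty =>
    have hT : 0 ≤ T := arctan_nonneg.mp (by simpa using h)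
    rw [esymm, powersetCard_eq_empty.mpr (by simp), sum_empty]
    exact mul_nonneg hT (esymm_nonneg (by simp) k)
  | @insert a s ha ih =>
    have ha0 : 0 ≤ μ a := hμ a (mem_insert_self a s)
    have hsμ : ∀ i ∈ s, 0 ≤ μ i := fun i hi => hμ i (mem_insert_of_mem hi)
    rw [sum_insert ha] at h
    set y := ∑ i ∈ s, arctan (μ i)
    have hy0 : 0 ≤ y := sum_nonneg fun i hi => arctan_nonneg.mpr (hsμ i hi)
    have hyT : arctan (tan y) = y := arctan_tan (by linarith [pi_pos])
      (by linarith [arctan_nonneg.mpr ha0, arctan_lt_pi_div_two T])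
    have ht0 : 0 ≤ tan y := arctan_nonneg.mp (hyT.symm ▸ hy0)
    have hat : μ a * tan y < 1 := mul_lt_one_of_arctan_add_arctan_lt_pi_div_two ha0
      (by linarith [arctan_lt_pi_div_two T])
    have htan_sum : μ a + tan y ≤ T * (1 - μ a * tan y) := by
      rw [← hyT, arctan_add hat, arctan_le_arctan_iff, div_le_iff₀ (by linarith)] at h
      exact h
    have hT : 0 ≤ T := by nlinarith
    have hB : 0 ≤ s.esymm μ k := esymm_nonneg hsμ k
    calc (insert a s).esymm μ (k + 1) = s.esymm μ (k + 1) + μ a * s.esymm μ k :=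
          esymm_insert ha k
      _ ≤ (tan y + μ a) * s.esymm μ k := by linarith [ih hsμ hyT.ge]
      _ ≤ T * s.esymm μ k := by nlinarith [mul_nonneg (mul_nonneg hT (mul_nonneg ha0 ht0)) hB]
      _ ≤ T * (insert a s).esymm μ k :=
          mul_le_mul_of_nonneg_left (esymm_mono (subset_insert a s) hμ k) hT

theorem esymm_le_mul_esymm_succ_of_sum_arctan_inv_le [DecidableEq ι] {s : Finset ι}
    {lam : ι → ℝ} (hlam : ∀ i ∈ s, 0 < lam i) {T : ℝ}
    (h : ∑ i ∈ s, arctan (lam i)⁻¹ ≤ arctan T) {k : ℕ} (hk : k < #s) : s.esymm lam k ≤ T * s.esymm lam (k + 1) := by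
  have hne : ∀ i ∈ s, lam i ≠ 0 := fun i hi => (hlam i hi).ne'
  have hP : 0 ≤ ∏ i ∈ s, lam i := prod_nonneg fun i hi => (hlam i hi).le
  have hkey := esymm_succ_le_mul_esymm_of_sum_arctan_le
    (fun i hi => (inv_pos.mpr (hlam i hi)).le) h (#s - (k + 1))
  rw [esymm_eq_prod_mul_esymm_inv hne hk.le, esymm_eq_prod_mul_esymm_inv hne hk,
    show #s - k = #s - (k + 1) + 1 by omega, mul_left_comm]
  exact mul_le_mul_of_nonneg_left hkey hP

end Finset

theorem sum_pi_div_two_sub_arctan_le_pi {ι : Type*} [Fintype ι] {lam : ι → ℝ}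
    (h : ((Fintype.card ι : ℝ) - 2) * (π / 2) ≤ ∑ i, arctan (lam i)) :
    ∑ i, (π / 2 - arctan (lam i)) ≤ π := by
  rw [sum_sub_distrib, sum_const, card_univ, nsmul_eq_mul]
  linarith

theorem neg_le_of_sum_pi_div_two_sub_arctan_le_pi {ι : Type*} [Fintype ι] [DecidableEq ι]
    {lam : ι → ℝ} (h : ∑ i, (π / 2 - arctan (lam i)) ≤ π) {i j : ι} (hij : i ≠ j) :
    -lam i ≤ lam j := by
  have hpair := (sum_le_sum_of_subset_of_nonneg (subset_univ {i, j}) fun k _ _ =>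
    (sub_nonneg.mpr (arctan_lt_pi_div_two (lam k)).le)).trans h
  rw [sum_pair hij] at hpair
  rw [← arctan_le_arctan_iff, arctan_neg]
  linarith

theorem stmt_5_general (n : ℕ) (k : ℕ) (hk2 : k ≤ n - 1)
    (lam : Fin n → ℝ)
    (hphase : (n - 2 : ℝ) * (Real.pi / 2) ≤ ∑ i, Real.arctan (lam i)) :
    0 ≤ ∑ s ∈ Finset.univ.powersetCard k, ∏ i ∈ s, lam i := by
  change 0 ≤ univ.esymm lam k
  by_cases hall : ∀ i, 0 ≤ lam i
  · exact esymm_nonneg (fun i _ => hall i) k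
  push Not at hall
  obtain ⟨i₀, hi₀⟩ := hall
  rcases k with _ | k
  · simp [esymm]
  have hdef : ∑ i, (π / 2 - arctan (lam i)) ≤ π :=
    sum_pi_div_two_sub_arctan_le_pi (by simpa using hphase)
  have hpos : ∀ j ∈ univ.erase i₀, 0 < lam j := fun j hj =>
    (neg_pos.mpr hi₀).trans_le
      (neg_le_of_sum_pi_div_two_sub_arctan_le_pi hdef (ne_of_mem_erase hj).symm)
  have hrecip : ∑ j ∈ univ.erase i₀, arctan (lam j)⁻¹ ≤ arctan (-lam i₀)⁻¹ := by
    rw [sum_congr rfl fun j hj => arctan_inv_of_pos (hpos j hj),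
      arctan_inv_of_pos (neg_pos.mpr hi₀), arctan_neg]
    rw [← add_sum_erase _ _ (mem_univ i₀)] at hdef
    linarith
  have hk : k < #(univ.erase i₀) := by
    rw [card_erase_of_mem (mem_univ _), card_univ, Fintype.card_fin]; omega
  have hkey := mul_le_mul_of_nonneg_left
    (esymm_le_mul_esymm_succ_of_sum_arctan_inv_le hpos hrecip hk) (neg_nonneg.mpr hi₀.le)
  rw [← mul_assoc, mul_inv_cancel₀ (neg_pos.mpr hi₀).ne', one_mul] at hkey
  rw [← insert_erase (mem_univ i₀), esymm_insert (notMem_erase _ _)]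
  linarith

theorem stmt_5 (n : ℕ) (hn : 2 ≤ n) (k : ℕ) (hk1 : 1 ≤ k) (hk2 : k ≤ n - 1)
    (lam : Fin n → ℝ)
    (hphase : (n - 2 : ℝ) * (Real.pi / 2) ≤ ∑ i, Real.arctan (lam i)) :
    0 ≤ ∑ s ∈ Finset.univ.powersetCard k, ∏ i ∈ s, lam i :=
  stmt_5_general n k hk2 lam hphase
end

section
/- Let $n \ge 2$ and $c \ge (n-2)\frac{\pi}{2}$. Then the superlevel set $\{\lambda \in \mathbb{R}^n : \sum_{i=1}^n \arctan \lambda_i \ge c\}$ is a convex subset of $\mathbb{R}^n$. -/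
/-!
With `arccot x = π / 2 - arctan x ∈ (0, π)`, the condition `c < ∑ arctan λᵢ` reads
`∑ arccot λᵢ < σ := n π / 2 - c`, and supercriticality is `σ ≤ π`. On the region
`Ω = {∑ arccot λᵢ < π}` the cotangent addition law expresses `Φ = cot (∑ arccot λᵢ)` recursively
as `cotAdd (cot (∑_{i ≠ a} arccot λᵢ)) λₐ`, where `cotAdd u v = (u v - 1) / (u + v)`. On the
half-plane `u + v > 0`, `cotAdd u v = v - (1 + v²) / (u + v)` is increasing in `u` and concave
(a linear function minus a quadratic-over-linear one), so by induction on the number of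
coordinates `Ω` is convex and `Φ` is concave on it. The strict superlevel sets of `∑ arctan` are
then `Ω` or `{λ ∈ Ω | cot σ < Φ λ}`, hence convex, and the closed ones are their closures.
-/

open Real Set Finset Filter Topology

namespace Real

noncomputable def arccot (x : ℝ) : ℝ := π / 2 - arctan x

noncomputable def cotAdd (u v : ℝ) : ℝ := (u * v - 1) / (u + v)

theorem arccot_pos (x : ℝ) : 0 < arccot x := by
  unfold arccot; linarith [arctan_lt_pi_div_two x]

theorem arccot_lt_pi (x : ℝ) : arccot x < π := by
  unfold arccot; linarith [neg_pi_div_two_lt_arctan x]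

theorem arccot_lt_arccot {x y : ℝ} : arccot x < arccot y ↔ y < x := by
  simp [arccot, arctan_strictMono.lt_iff_lt]

theorem cot_arccot (x : ℝ) : cot (arccot x) = x := by
  rw [arccot, ← tan_inv_eq_cot, tan_pi_div_two_sub, inv_inv, tan_arctan]

theorem arccot_cot {θ : ℝ} (h₀ : 0 < θ) (h₁ : θ < π) : arccot (cot θ) = θ := by
  rw [arccot, arctan_eq_of_tan_eq (x := π / 2 - θ)]
  · ring
  · rw [tan_pi_div_two_sub, tan_inv_eq_cot]
  · constructor <;> linarith

theorem arccot_add_arccot_lt_pi_iff {x y : ℝ} : arccot x + arccot y < π ↔ 0 < x + y := by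
  calc arccot x + arccot y < π ↔ arctan (-y) < arctan x := by
        rw [arctan_neg, arccot, arccot]; constructor <;> intro h <;> linarith
    _ ↔ 0 < x + y := by rw [arctan_strictMono.lt_iff_lt, neg_lt_iff_pos_add', add_comm]

theorem arccot_add_arccot {x y : ℝ} (h : 0 < x + y) :
    arccot x + arccot y = arccot (cotAdd x y) := by
  have hsum : 0 < arctan x + arctan y := by
    rw [← neg_lt_iff_pos_add, ← arctan_neg]; exact arctan_strictMono (by linarith)
  have hsin : ∀ z, sin (arctan z) = z * cos (arctan z) := fun z => by
    rw [← div_eq_iff (cos_arctan_pos z).ne', ← tan_eq_sin_div_cos, tan_arctan]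
  have htan : tan (arctan x + arctan y - π / 2) = cotAdd x y := by
    have := cos_arctan_pos x
    have := cos_arctan_pos y
    rw [tan_eq_sin_div_cos, sin_sub_pi_div_two, cos_sub_pi_div_two, sin_add, cos_add, hsin x,
      hsin y, cotAdd]
    field_simp
    ring
  rw [arccot, arccot, arccot, arctan_eq_of_tan_eq htan]
  · ring
  · constructor <;> linarith [arctan_lt_pi_div_two x, arctan_lt_pi_div_two y]

theorem arccot_add_lt_pi_iff {θ : ℝ} (h₀ : 0 < θ) (h₁ : θ < π) (v : ℝ) :
    arccot v + θ < π ↔ 0 < cot θ + v := by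
  conv_lhs => rw [← arccot_cot h₀ h₁, add_comm]
  exact arccot_add_arccot_lt_pi_iff

theorem cot_arccot_add {θ v : ℝ} (h₀ : 0 < θ) (h₁ : θ < π) (h : 0 < cot θ + v) :
    cot (arccot v + θ) = cotAdd (cot θ) v := by
  conv_lhs => rw [← arccot_cot h₀ h₁, add_comm]
  rw [arccot_add_arccot h, cot_arccot]

theorem cotAdd_eq_sub_div {u v : ℝ} (h : u + v ≠ 0) :
    cotAdd u v = v - (1 + v ^ 2) / (u + v) := by
  rw [cotAdd]; field_simp; ring

theorem cotAdd_le_cotAdd_left {u u' v : ℝ} (h : 0 < u + v) (hu : u ≤ u') :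
    cotAdd u v ≤ cotAdd u' v := by
  rw [cotAdd_eq_sub_div h.ne', cotAdd_eq_sub_div (by linarith)]
  gcongr

theorem concaveOn_cotAdd :
    ConcaveOn ℝ {p : ℝ × ℝ | 0 < p.1 + p.2} (fun p => cotAdd p.1 p.2) := by
  have hD := convex_halfSpace_gt (LinearMap.fst ℝ ℝ ℝ + LinearMap.snd ℝ ℝ ℝ).isLinear 0
  refine ⟨hD, ?_⟩
  rintro ⟨u₁, v₁⟩ h₁ ⟨u₂, v₂⟩ h₂ a b ha hb hab
  have h := hD h₁ h₂ ha hb hab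
  simp only [mem_ofPred_eq, LinearMap.add_apply, LinearMap.fst_apply, LinearMap.snd_apply,
    Prod.smul_mk, Prod.mk_add_mk, smul_eq_mul] at h₁ h₂ h ⊢
  rw [cotAdd_eq_sub_div h₁.ne', cotAdd_eq_sub_div h₂.ne', cotAdd_eq_sub_div h.ne']
  have hpersp : (1 + (a * v₁ + b * v₂) ^ 2) / ((a * u₁ + b * u₂) + (a * v₁ + b * v₂))
      ≤ a * ((1 + v₁ ^ 2) / (u₁ + v₁)) + b * ((1 + v₂ ^ 2) / (u₂ + v₂)) := by
    rw [mul_div_assoc', mul_div_assoc', div_add_div _ _ h₁.ne' h₂.ne',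
      div_le_div_iff₀ h (by positivity)]
    obtain rfl : b = 1 - a := by linarith
    -- with `sᵢ = uᵢ + vᵢ`, the difference of the two sides is `ab((s₁ - s₂)² + (v₁s₂ - v₂s₁)²)`
    nlinarith [mul_nonneg (mul_nonneg ha hb) (add_nonneg (sq_nonneg (u₁ + v₁ - (u₂ + v₂)))
      (sq_nonneg (v₁ * (u₂ + v₂) - v₂ * (u₁ + v₁))))]
  linarith

end Real

theorem ConcaveOn.cotAdd_linearMap {E : Type*} [AddCommGroup E] [Module ℝ E] {D : Set E}
    {g : E → ℝ} (hg : ConcaveOn ℝ D g) (ℓ : E →ₗ[ℝ] ℝ) :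
    ConcaveOn ℝ {x ∈ D | 0 < g x + ℓ x} (fun x => cotAdd (g x) (ℓ x)) := by
  refine ⟨(hg.add (ℓ.concaveOn hg.1)).convex_gt 0, ?_⟩
  rintro x ⟨hxD, hx⟩ y ⟨hyD, hy⟩ a b ha hb hab
  have hx' : (g x, ℓ x) ∈ {p : ℝ × ℝ | 0 < p.1 + p.2} := hx
  have hy' : (g y, ℓ y) ∈ {p : ℝ × ℝ | 0 < p.1 + p.2} := hy
  have hcomb : 0 < (a * g x + b * g y) + (a * ℓ x + b * ℓ y) := by
    simpa using concaveOn_cotAdd.1 hx' hy' ha hb hab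
  calc a • cotAdd (g x) (ℓ x) + b • cotAdd (g y) (ℓ y)
      ≤ cotAdd (a * g x + b * g y) (a * ℓ x + b * ℓ y) := by
        simpa using concaveOn_cotAdd.2 hx' hy' ha hb hab
    _ ≤ cotAdd (g (a • x + b • y)) (ℓ (a • x + b • y)) := by
        rw [map_add, map_smul, map_smul, smul_eq_mul, smul_eq_mul]
        exact cotAdd_le_cotAdd_left hcomb (by simpa using hg.2 hxD hyD ha hb hab)

section ArccotSum

variable {ι : Type*} {s : Finset ι}

theorem sum_arccot_pos (hs : s.Nonempty) (x : ι → ℝ) : 0 < ∑ i ∈ s, arccot (x i) :=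
  sum_pos (fun _ _ => arccot_pos _) hs

theorem concaveOn_cot_sum_arccot (hs : s.Nonempty) :
    ConcaveOn ℝ {x : ι → ℝ | ∑ i ∈ s, arccot (x i) < π}
      (fun x => cot (∑ i ∈ s, arccot (x i))) := by
  induction hs using Finset.Nonempty.cons_induction with
  | singleton a =>
    simp only [sum_singleton, arccot_lt_pi, ofPred_true, cot_arccot]
    exact (LinearMap.proj a).concaveOn convex_univ
  | cons a s ha hs ih =>
    have hdom : {x : ι → ℝ | ∑ i ∈ s.cons a ha, arccot (x i) < π} =
        {x ∈ {x : ι → ℝ | ∑ i ∈ s, arccot (x i) < π} |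
          0 < cot (∑ i ∈ s, arccot (x i)) + x a} := by
      ext x
      simp only [sum_cons, mem_ofPred_eq]
      refine ⟨fun h => ?_, fun ⟨hlt, h⟩ => (arccot_add_lt_pi_iff (sum_arccot_pos hs x) hlt _).2 h⟩
      have hlt : ∑ i ∈ s, arccot (x i) < π := by linarith [arccot_pos (x a)]
      exact ⟨hlt, (arccot_add_lt_pi_iff (sum_arccot_pos hs x) hlt _).1 h⟩
    rw [hdom]
    refine (ih.cotAdd_linearMap (LinearMap.proj a)).congr fun x ⟨hlt, h⟩ => ?_
    simp only [sum_cons]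
    exact (cot_arccot_add (sum_arccot_pos hs x) hlt h).symm

theorem convex_setOf_sum_arccot_lt (hs : s.Nonempty) {σ : ℝ} (hσ : σ ≤ π) :
    Convex ℝ {x : ι → ℝ | ∑ i ∈ s, arccot (x i) < σ} := by
  rcases le_or_gt σ 0 with hσ₀ | hσ₀
  · convert convex_empty (𝕜 := ℝ) (E := ι → ℝ)
    exact eq_empty_of_forall_notMem fun x hx => by
      linarith [sum_arccot_pos hs x, show _ < σ from hx]
  rcases hσ.lt_or_eq with hσ₁ | rfl
  · have hset : {x : ι → ℝ | ∑ i ∈ s, arccot (x i) < σ} =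
        {x ∈ {x : ι → ℝ | ∑ i ∈ s, arccot (x i) < π} | cot σ < cot (∑ i ∈ s, arccot (x i))} := by
      ext x
      simp only [mem_ofPred_eq]
      refine ⟨fun h => ⟨h.trans hσ₁, ?_⟩, fun ⟨hlt, h⟩ => ?_⟩
      · rwa [← arccot_cot (sum_arccot_pos hs x) (h.trans hσ₁), ← arccot_cot hσ₀ hσ₁,
          arccot_lt_arccot] at h
      · rwa [← arccot_cot (sum_arccot_pos hs x) hlt, ← arccot_cot hσ₀ hσ₁, arccot_lt_arccot]
    rw [hset]
    exact (concaveOn_cot_sum_arccot hs).convex_gt (cot σ)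
  · exact (concaveOn_cot_sum_arccot hs).1

theorem sum_arctan_eq_sub_sum_arccot (s : Finset ι) (x : ι → ℝ) :
    ∑ i ∈ s, arctan (x i) = s.card * (π / 2) - ∑ i ∈ s, arccot (x i) := by
  simp [arccot, sum_sub_distrib]

end ArccotSum

theorem setOf_le_sum_arctan_eq_closure {ι : Type*} [Fintype ι] [Nonempty ι] (c : ℝ) :
    {x : ι → ℝ | c ≤ ∑ i, arctan (x i)} = closure {x | c < ∑ i, arctan (x i)} := by
  have hcont : Continuous fun x : ι → ℝ => ∑ i, arctan (x i) := by fun_prop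
  refine Subset.antisymm (fun x hx => ?_) (closure_lt_subset_le continuous_const hcont)
  have hshift : Tendsto (fun ε : ℝ => x + Function.const ι ε) (𝓝[>] 0) (𝓝 x) :=
    tendsto_nhdsWithin_of_tendsto_nhds (Continuous.tendsto' (by fun_prop) 0 x (by simp))
  refine mem_closure_of_tendsto hshift (eventually_nhdsWithin_of_forall fun ε (hε : 0 < ε) => ?_)
  exact lt_of_le_of_lt hx (sum_lt_sum_of_nonempty univ_nonempty fun i _ =>
    arctan_strictMono (by simpa using hε))

theorem stmt_10 (n : ℕ) (hn : 2 ≤ n) (c : ℝ) (hc : (n - 2 : ℝ) * (Real.pi / 2) ≤ c) :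
    Convex ℝ {lam : Fin n → ℝ | c ≤ ∑ i, Real.arctan (lam i)} := by
  have : Nonempty (Fin n) := ⟨⟨0, by omega⟩⟩
  have hset : {lam : Fin n → ℝ | c < ∑ i, arctan (lam i)} =
      {x | ∑ i, arccot (x i) < n * (π / 2) - c} := by
    ext x
    rw [mem_ofPred_eq, mem_ofPred_eq, sum_arctan_eq_sub_sum_arccot, card_univ, Fintype.card_fin]
    constructor <;> intro h <;> linarith
  rw [setOf_le_sum_arctan_eq_closure, hset]
  exact (convex_setOf_sum_arccot_lt univ_nonempty (by linarith)).closure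
end

section
/- Let $0 \le \lambda_2 \le \lambda_1$ be real numbers and let $A \ge 1$. Then $2(\lambda_1 + \lambda_2) - \frac{3}{2} \cdot \frac{(\lambda_1^2 - \lambda_2^2)^2}{(A + \lambda_1 + \lambda_2)(1 + \lambda_1^2)} \ge \frac{1}{2}\lambda_1$. -/
theorem stmt_13 (l1 l2 A : ℝ) (h2 : 0 ≤ l2) (h12 : l2 ≤ l1) (hA : 1 ≤ A) :
    (1 / 2 : ℝ) * l1 ≤
      2 * (l1 + l2) - 3 / 2 * ((l1 ^ 2 - l2 ^ 2) ^ 2 / ((A + l1 + l2) * (1 + l1 ^ 2))) := by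
  have h1 : 0 ≤ l1 := le_trans h2 h12
  have hden : 0 < (A + l1 + l2) * (1 + l1 ^ 2) := by
    apply mul_pos (by linarith) (by positivity)
  have ha : (l1 - l2) ^ 2 ≤ 1 + l1 ^ 2 := by nlinarith
  have hb : (l1 + l2) ^ 2 ≤ (A + l1 + l2) * (l1 + l2) := by nlinarith
  have hfrac : (l1 ^ 2 - l2 ^ 2) ^ 2 / ((A + l1 + l2) * (1 + l1 ^ 2)) ≤ l1 + l2 := by
    rw [div_le_iff₀ hden]
    have key : ((l1 - l2) * (l1 + l2)) ^ 2 ≤ (1 + l1 ^ 2) * ((A + l1 + l2) * (l1 + l2)) := by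
      rw [mul_pow]
      exact mul_le_mul ha hb (sq_nonneg _) (by positivity)
    calc (l1 ^ 2 - l2 ^ 2) ^ 2 = ((l1 - l2) * (l1 + l2)) ^ 2 := by ring
      _ ≤ (1 + l1 ^ 2) * ((A + l1 + l2) * (l1 + l2)) := key
      _ = (l1 + l2) * ((A + l1 + l2) * (1 + l1 ^ 2)) := by ring
  linarith
end
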